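/- Degeneration T_05 → T_11: let μ be the commutative bilinear product on ℂ³ with u₁∘u₁ = u₁, u₂∘u₂ = u₂, u₁∘u₃ = (1/2)u₃ and all other products of basis vectors zero, and let λ be the commutative bilinear product with u₁∘u₁ = u₁, u₁∘u₂ = (1/2)u₂, u₁∘u₃ = u₃ and all other products of basis vectors zero. Then λ lies in the closure of the orbit {g·μ : g ∈ GL(3,ℂ)} in the space of bilinear maps ℂ³ × ℂ³ → ℂ³ with its standard topology. -/

import Mathlib

open Matrix

/-- The bilinear product on `ℂ³` determined by structure constants `c`:
`(x ∘ y) k = ∑ i j, x i * y j * c i j k`. -/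
noncomputable def bilOf (c : Fin 3 → Fin 3 → Fin 3 → ℂ) (x y : Fin 3 → ℂ) : Fin 3 → ℂ :=
  fun k => ∑ i, ∑ j, x i * y j * c i j k

/-- The action of `g ∈ GL(3,ℂ)` on structure constants, corresponding to the
action `(g·μ)(x,y) = g(μ(g⁻¹x, g⁻¹y))` on bilinear maps: `(act g c) i j` is the
coordinate vector of `(g·μ)(uᵢ, uⱼ)` in the standard basis `u₁, u₂, u₃`. -/
noncomputable def act (g : GL (Fin 3) ℂ) (c : Fin 3 → Fin 3 → Fin 3 → ℂ) :
    Fin 3 → Fin 3 → Fin 3 → ℂ :=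
  fun i j => (g : Matrix (Fin 3) (Fin 3) ℂ).mulVec
    (bilOf c (((g⁻¹ : GL (Fin 3) ℂ) : Matrix (Fin 3) (Fin 3) ℂ).mulVec (Pi.single i 1))
             (((g⁻¹ : GL (Fin 3) ℂ) : Matrix (Fin 3) (Fin 3) ℂ).mulVec (Pi.single j 1)))

open Topology

/-!
In the basis `e₁ = u₁ + u₂, e₂ = t u₃, e₃ = t (u₁ - u₂)` of `ℂ³` (`t ≠ 0`), the product `μ` reads
`e₁e₁ = e₁, e₁e₂ = ½ e₂, e₁e₃ = e₃, e₂e₃ = (t/2) e₂, e₃e₃ = t² e₁`, and these structure constants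
tend to those of `λ` as `t → 0`.
-/

theorem mem_closure_of_continuousAt_of_forall_ne {α X : Type*} [TopologicalSpace α]
    [TopologicalSpace X] {a : α} [(𝓝[≠] a).NeBot] {f : α → X} {s : Set X}
    (hf : ContinuousAt f a) (h : ∀ t ≠ a, f t ∈ s) : f a ∈ closure s :=
  mem_closure_of_tendsto (b := 𝓝[≠] a) (hf.tendsto.mono_left nhdsWithin_le_nhds)
    (eventually_nhdsWithin_of_forall h)

theorem act_inv_eq_of_bilOf_col (P : GL (Fin 3) ℂ) {c c' : Fin 3 → Fin 3 → Fin 3 → ℂ}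
    (h : ∀ i j, bilOf c ((P : Matrix (Fin 3) (Fin 3) ℂ).col i)
      ((P : Matrix (Fin 3) (Fin 3) ℂ).col j) = (P : Matrix (Fin 3) (Fin 3) ℂ) *ᵥ c' i j) :
    act P⁻¹ c = c' := by
  funext i j
  rw [act, inv_inv, mulVec_single_one, mulVec_single_one, h, mulVec_mulVec, ← Units.val_mul,
    inv_mul_cancel, Units.val_one, one_mulVec]

noncomputable def algT05 : Fin 3 → Fin 3 → Fin 3 → ℂ :=
  ![![![1, 0, 0], ![0, 0, 0], ![0, 0, 1/2]],
    ![![0, 0, 0], ![0, 1, 0], ![0, 0, 0]],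
    ![![0, 0, 1/2], ![0, 0, 0], ![0, 0, 0]]]

noncomputable def algT11 : Fin 3 → Fin 3 → Fin 3 → ℂ :=
  ![![![1, 0, 0], ![0, 1/2, 0], ![0, 0, 1]],
    ![![0, 1/2, 0], ![0, 0, 0], ![0, 0, 0]],
    ![![0, 0, 1], ![0, 0, 0], ![0, 0, 0]]]

def degenFrame (t : ℂ) : Matrix (Fin 3) (Fin 3) ℂ :=
  !![1, 0, t; 1, 0, -t; 0, t, 0]

theorem det_degenFrame (t : ℂ) : (degenFrame t).det = 2 * t ^ 2 := by
  simp [degenFrame, det_fin_three, sq, two_mul]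

noncomputable def degenFamily (t : ℂ) : Fin 3 → Fin 3 → Fin 3 → ℂ :=
  ![![![1, 0, 0], ![0, 1/2, 0], ![0, 0, 1]],
    ![![0, 1/2, 0], ![0, 0, 0], ![0, t/2, 0]],
    ![![0, 0, 1], ![0, t/2, 0], ![t^2, 0, 0]]]

theorem continuous_degenFamily : Continuous degenFamily := by
  refine continuous_pi fun i => continuous_pi fun j => continuous_pi fun k => ?_
  fin_cases i <;> fin_cases j <;> fin_cases k <;> simp [degenFamily] <;> fun_prop

theorem degenFamily_zero : degenFamily 0 = algT11 := by
  simp [degenFamily, algT11]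

theorem bilOf_algT05_col_degenFrame (t : ℂ) (i j : Fin 3) :
    bilOf algT05 ((degenFrame t).col i) ((degenFrame t).col j)
      = degenFrame t *ᵥ degenFamily t i j := by
  funext k
  fin_cases i <;> fin_cases j <;> fin_cases k <;>
    simp [bilOf, algT05, degenFrame, degenFamily, mulVec, dotProduct, Fin.sum_univ_three] <;> ring

theorem act_degenFrame_inv (t : ℂ) (ht : t ≠ 0) :
    act (GeneralLinearGroup.mkOfDetNeZero (degenFrame t) (by simp [det_degenFrame, ht]))⁻¹ algT05
      = degenFamily t :=
  act_inv_eq_of_bilOf_col _ (bilOf_algT05_col_degenFrame t)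

/-- Degeneration T_05 → T_11: here μ is u₁∘u₁ = u₁, u₂∘u₂ = u₂, u₁∘u₃ = (1/2)u₃ and λ is u₁∘u₁ = u₁, u₁∘u₂ = (1/2)u₂, u₁∘u₃ = u₃; λ lies in the closure of the GL(3,ℂ)-orbit of μ. -/
theorem degeneration_T05_T11 :
    (![![![(1:ℂ),0,0],![(0:ℂ),1/2,0],![(0:ℂ),0,1]],![![(0:ℂ),1/2,0],![(0:ℂ),0,0],![(0:ℂ),0,0]],![![(0:ℂ),0,1],![(0:ℂ),0,0],![(0:ℂ),0,0]]] : Fin 3 → Fin 3 → Fin 3 → ℂ)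
      ∈ closure {c : Fin 3 → Fin 3 → Fin 3 → ℂ |
          ∃ g : GL (Fin 3) ℂ, c = act g (![![![(1:ℂ),0,0],![(0:ℂ),0,0],![(0:ℂ),0,1/2]],![![(0:ℂ),0,0],![(0:ℂ),1,0],![(0:ℂ),0,0]],![![(0:ℂ),0,1/2],![(0:ℂ),0,0],![(0:ℂ),0,0]]] : Fin 3 → Fin 3 → Fin 3 → ℂ)} := by
  show algT11 ∈ closure {c | ∃ g, c = act g algT05}
  rw [← degenFamily_zero]
  exact mem_closure_of_continuousAt_of_forall_ne continuous_degenFamily.continuousAt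
    fun t ht => ⟨_, (act_degenFrame_inv t ht).symm⟩
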